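/- arXiv:1409.4332 — 2 statements merged into one kernel-verified Lean document; each statement's English description precedes it below -/
import Mathlib

section
/- Suppose ψ : G → ℝ is a function of conditionally negative type on a group G. Then for every t > 0 the function g ↦ e^{−tψ(g)} is positive definite on G (Schoenberg's theorem). -/
open scoped ComplexOrder
/-- A function `ψ : G → ℝ` on a group is of *conditionally negative type* if `ψ(e) = 0`,
`ψ(g⁻¹) = ψ(g)`, and `∑ᵢⱼ cᵢ cⱼ ψ(gᵢ⁻¹ gⱼ) ≤ 0` whenever `∑ᵢ cᵢ = 0`. -/
structure IsCondNegType {G : Type*} [Group G] (ψ : G → ℝ) : Prop where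
  map_one : ψ 1 = 0
  map_inv : ∀ g : G, ψ g⁻¹ = ψ g
  neg_type : ∀ (n : ℕ) (g : Fin n → G) (c : Fin n → ℝ), (∑ i, c i) = 0 →
    ∑ i, ∑ j, c i * c j * ψ ((g i)⁻¹ * g j) ≤ 0

/-- A function `φ : G → ℂ` is *positive definite* if all the matrices
`[φ(gᵢ⁻¹ gⱼ)]` are positive semidefinite. -/
def IsPosDefFn {G : Type*} [Group G] (φ : G → ℂ) : Prop :=
  ∀ (n : ℕ) (g : Fin n → G),
    (Matrix.of fun i j : Fin n => φ ((g i)⁻¹ * g j)).PosSemidef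

/-!
Write `[e^{-tψ(gᵢ⁻¹gⱼ)}]` as `D E D` with `D = diag(e^{-tψ(gᵢ)})` and `E` the entrywise
exponential of `t K`, where `K = [ψ(gᵢ) + ψ(gⱼ) - ψ(gᵢ⁻¹gⱼ)]`. The quadratic form of `K` at `x` is
minus the conditionally negative form at the points `(1, g₁, …, gₙ)` with the coefficients
`(-∑ xᵢ, x₁, …, xₙ)`, which sum to zero, so `K` is positive semidefinite. Entrywise exponentials
of positive semidefinite matrices are positive semidefinite: by the Schur product theorem every
Hadamard power is, and `exp` is a power series with nonnegative coefficients.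
-/

namespace Matrix

variable {n 𝕜 : Type*} [Fintype n] [RCLike 𝕜]

theorem PosSemidef.map_pow {A : Matrix n n 𝕜} (hA : A.PosSemidef) :
    ∀ k : ℕ, (A.map (· ^ k)).PosSemidef
  | 0 => by simpa [vecMulVec, map] using posSemidef_vecMulVec_self_star (fun _ : n => (1 : 𝕜))
  | k + 1 => by
    convert hA.hadamard (hA.map_pow k) using 1
    ext i j
    simp [pow_succ']

theorem PosSemidef.map_exp {A : Matrix n n ℝ} (hA : A.PosSemidef) :
    (A.map Real.exp).PosSemidef := by
  refine .of_dotProduct_mulVec_nonneg (hA.isHermitian.map _ fun _ => rfl) fun x => ?_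
  have hsum : HasSum (fun k => star x ⬝ᵥ (A.map (· ^ k)) *ᵥ x / k.factorial)
      (star x ⬝ᵥ (A.map Real.exp) *ᵥ x) := by
    simp only [dotProduct, mulVec, map_apply, Finset.mul_sum, Finset.sum_div]
    refine hasSum_sum fun i _ => hasSum_sum fun j _ => ?_
    have hexp : HasSum (fun k => A i j ^ k / k.factorial) (Real.exp (A i j)) := by
      simpa only [Real.exp_eq_exp_ℝ] using NormedSpace.expSeries_div_hasSum_exp (A i j)
    simpa only [div_mul_eq_mul_div, ← mul_div_assoc] using
      (hexp.mul_right (x j)).mul_left (star x i)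
  exact hsum.nonneg fun k =>
    div_nonneg ((hA.map_pow k).dotProduct_mulVec_nonneg x) k.factorial.cast_nonneg

open scoped MatrixOrder in
theorem PosSemidef.map_ofReal {A : Matrix n n ℝ} (hA : A.PosSemidef) :
    (A.map ((↑) : ℝ → 𝕜)).PosSemidef := by
  classical
  obtain ⟨B, rfl⟩ := CStarAlgebra.nonneg_iff_eq_star_mul_self.mp hA.nonneg
  convert posSemidef_conjTranspose_mul_self (B.map ((↑) : ℝ → 𝕜)) using 1
  ext i j
  simp [mul_apply]

end Matrix

namespace IsCondNegType

variable {G : Type*} [Group G] {ψ : G → ℝ}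

theorem apply_inv_mul_comm (hψ : IsCondNegType ψ) (a b : G) : ψ (b⁻¹ * a) = ψ (a⁻¹ * b) := by
  rw [← hψ.map_inv, mul_inv_rev, inv_inv]

open Matrix

theorem posSemidef_kernel (hψ : IsCondNegType ψ) {n : ℕ} (g : Fin n → G) :
    (of fun i j => ψ (g i) + ψ (g j) - ψ ((g i)⁻¹ * g j)).PosSemidef := by
  refine .of_dotProduct_mulVec_nonneg ?_ fun x => ?_
  · ext i j
    simp [hψ.apply_inv_mul_comm, add_comm]
  set s := ∑ i, x i
  set T := ∑ i, x i * ψ (g i)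
  set Q := ∑ i, ∑ j, x i * x j * ψ ((g i)⁻¹ * g j)
  have hcond := hψ.neg_type (n + 1) (Fin.cons 1 g) (Fin.cons (-s) x) (by simp [Fin.sum_cons, s])
  simp only [Fin.sum_univ_succ, Fin.cons_zero, Fin.cons_succ, inv_one, one_mul, mul_one,
    hψ.map_one, hψ.map_inv, mul_zero, zero_add, Finset.sum_add_distrib] at hcond
  have hsT₁ : ∑ j, -s * x j * ψ (g j) = -(s * T) := by
    simp only [T, Finset.mul_sum, ← Finset.sum_neg_distrib, neg_mul, mul_assoc]
  have hsT₂ : ∑ i, x i * -s * ψ (g i) = -(s * T) := by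
    simp only [T, Finset.mul_sum, ← Finset.sum_neg_distrib, mul_neg, neg_mul]
    exact Finset.sum_congr rfl fun i _ => by ring
  have hform : star x ⬝ᵥ (of fun i j => ψ (g i) + ψ (g j) - ψ ((g i)⁻¹ * g j)) *ᵥ x
      = T * s + s * T - Q := by
    simp only [s, T, Q]
    rw [Finset.sum_mul_sum, Finset.sum_mul_sum]
    simp only [dotProduct, mulVec, of_apply, star_trivial, Finset.mul_sum,
      ← Finset.sum_add_distrib, ← Finset.sum_sub_distrib]
    exact Finset.sum_congr rfl fun i _ => Finset.sum_congr rfl fun j _ => by ring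
  linarith

theorem posSemidef_exp_neg_mul (hψ : IsCondNegType ψ) {t : ℝ} (ht : 0 ≤ t) {n : ℕ}
    (g : Fin n → G) : (of fun i j => Real.exp (-t * ψ ((g i)⁻¹ * g j))).PosSemidef := by
  have h := ((hψ.posSemidef_kernel g).smul ht).map_exp.conjTranspose_mul_mul_same
    (diagonal fun i => Real.exp (-t * ψ (g i)))
  convert h using 1
  ext i j
  simp only [of_apply, diagonal_conjTranspose, star_trivial, diagonal_mul, mul_diagonal,
    map_apply, Matrix.smul_apply, smul_eq_mul, ← Real.exp_add]
  ring_nf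

end IsCondNegType

/-- **Schoenberg's theorem**: if `ψ : G → ℝ` is of conditionally negative type, then for
every `t > 0` the function `g ↦ e^{−tψ(g)}` is positive definite on `G`. -/
theorem schoenberg {G : Type*} [Group G] (ψ : G → ℝ) (hψ : IsCondNegType ψ) :
    ∀ t : ℝ, 0 < t → IsPosDefFn (fun g : G => (Real.exp (-t * ψ g) : ℂ)) :=
  fun _ ht _ g => (hψ.posSemidef_exp_neg_mul ht.le g).map_ofReal
end

section
/- Let G be a compact group acting continuously on a compact Hausdorff space X, with normalized Haar measure, and let c ∈ C(X) be nonnegative with ∫_G c²(s⁻¹x) ds = 1 for all x ∈ X. Then the function p(s,x) = c(x)·c(s⁻¹x) defines an element p of the convolution *-algebra C(G, C(X)) satisfying p * p = p and p* = p. -/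
/-!
Writing `p s x = c x * c (s⁻¹ • x)`, the integrand of `(p * p)(t)(x)` factors as
`c x * c (t⁻¹ • x) * c (s⁻¹ • x) ^ 2`, because `(s⁻¹ * t)⁻¹ • s⁻¹ • x = t⁻¹ • x`; the
normalisation of `c` makes the remaining integral equal to `1`. Self-adjointness is the symmetry
of `p t x` under `x ↦ t⁻¹ • x`, `t ↦ t⁻¹`.
-/

open MeasureTheory

theorem inv_mul_inv_smul_inv_smul {G X : Type*} [Group G] [MulAction G X] (s t : G) (x : X) :
    (s⁻¹ * t)⁻¹ • s⁻¹ • x = t⁻¹ • x := by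
  rw [smul_smul, mul_inv_rev, inv_inv, mul_inv_cancel_right]

section CutoffKernel

variable {G X R : Type*} [Group G] [MulAction G X]

def cutoffKernel [Mul R] (c : X → R) (s : G) (x : X) : R :=
  c x * c (s⁻¹ • x)

theorem continuous_cutoffKernel [TopologicalSpace G] [ContinuousInv G] [TopologicalSpace X]
    [ContinuousSMul G X] [TopologicalSpace R] [Mul R] [ContinuousMul R] {c : X → R}
    (hc : Continuous c) : Continuous fun q : G × X => cutoffKernel c q.1 q.2 :=
  (hc.comp continuous_snd).mul (hc.comp (continuous_fst.inv.smul continuous_snd))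

theorem cutoffKernel_inv_inv_smul [CommMagma R] (c : X → R) (t : G) (x : X) :
    cutoffKernel c t⁻¹ (t⁻¹ • x) = cutoffKernel c t x := by
  rw [cutoffKernel, cutoffKernel, inv_inv, smul_inv_smul, mul_comm]

theorem cutoffKernel_mul_cutoffKernel [CommMonoid R] (c : X → R) (s t : G) (x : X) :
    cutoffKernel c s x * cutoffKernel c (s⁻¹ * t) (s⁻¹ • x) =
      cutoffKernel c t x * c (s⁻¹ • x) ^ 2 := by
  rw [cutoffKernel, cutoffKernel, cutoffKernel, inv_mul_inv_smul_inv_smul, sq]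
  ac_rfl

theorem integral_cutoffKernel_mul_cutoffKernel {𝕜 : Type*} [RCLike 𝕜] [MeasurableSpace G]
    (μ : Measure G) (c : X → 𝕜) (t : G) (x : X) (hnorm : ∫ s : G, c (s⁻¹ • x) ^ 2 ∂μ = 1) :
    ∫ s : G, cutoffKernel c s x * cutoffKernel c (s⁻¹ * t) (s⁻¹ • x) ∂μ = cutoffKernel c t x := by
  simp_rw [cutoffKernel_mul_cutoffKernel]
  rw [integral_const_mul, hnorm, mul_one]

end CutoffKernel

theorem cutoff_projection_of_compact_group_general
    {G X : Type*} [Group G] [TopologicalSpace G] [IsTopologicalGroup G]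
    [MeasurableSpace G]
    (μ : Measure G)
    [TopologicalSpace X]
    [MulAction G X] [ContinuousSMul G X]
    (c : C(X, ℝ))
    (hnorm : ∀ x : X, ∫ s : G, (c (s⁻¹ • x)) ^ 2 ∂μ = 1)
    (p : G → X → ℝ) (hp : ∀ (s : G) (x : X), p s x = c x * c (s⁻¹ • x)) :
    -- `p` is a continuous function on `G × X`, i.e. an element of `C(G, C(X))`
    Continuous (fun q : G × X => p q.1 q.2) ∧
    -- `p * p = p` in the convolution algebra
    (∀ (t : G) (x : X), ∫ s : G, p s x * p (s⁻¹ * t) (s⁻¹ • x) ∂μ = p t x) ∧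
    -- `p* = p`
    (∀ (t : G) (x : X), p t⁻¹ (t⁻¹ • x) = p t x) := by
  obtain rfl : p = cutoffKernel c := funext₂ hp
  exact ⟨continuous_cutoffKernel c.continuous,
    fun t x => integral_cutoffKernel_mul_cutoffKernel μ c t x (hnorm x),
    cutoffKernel_inv_inv_smul c⟩

/-- Let `G` be a compact group acting continuously on a compact Hausdorff space `X`, with
normalized Haar measure `μ`, and let `c ∈ C(X)` be nonnegative with
`∫_G c²(s⁻¹x) ds = 1` for all `x ∈ X`.  Then the function `p(s,x) = c(x)·c(s⁻¹x)`
defines an element `p` of the convolution `*`-algebra `C(G, C(X))` satisfying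
`p * p = p` and `p* = p`, where `(f*g)(t)(x) = ∫_G f(s)(x)·g(s⁻¹t)(s⁻¹•x) ds` and
`f*(t)(x) = f(t⁻¹)(t⁻¹•x)` (the modular function being `1` since `G` is compact). -/
theorem cutoff_projection_of_compact_group
    {G X : Type*} [Group G] [TopologicalSpace G] [IsTopologicalGroup G] [CompactSpace G]
    [MeasurableSpace G] [BorelSpace G]
    (μ : Measure G) [μ.IsHaarMeasure] [IsProbabilityMeasure μ]
    [TopologicalSpace X] [CompactSpace X] [T2Space X]
    [MulAction G X] [ContinuousSMul G X]
    (c : C(X, ℝ)) (hc : ∀ x, 0 ≤ c x)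
    (hnorm : ∀ x : X, ∫ s : G, (c (s⁻¹ • x)) ^ 2 ∂μ = 1)
    (p : G → X → ℝ) (hp : ∀ (s : G) (x : X), p s x = c x * c (s⁻¹ • x)) :
    -- `p` is a continuous function on `G × X`, i.e. an element of `C(G, C(X))`
    Continuous (fun q : G × X => p q.1 q.2) ∧
    -- `p * p = p` in the convolution algebra
    (∀ (t : G) (x : X), ∫ s : G, p s x * p (s⁻¹ * t) (s⁻¹ • x) ∂μ = p t x) ∧
    -- `p* = p`
    (∀ (t : G) (x : X), p t⁻¹ (t⁻¹ • x) = p t x) :=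
  cutoff_projection_of_compact_group_general μ c hnorm p hp
end
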